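/- Let σ > 0, μ > 0, ν > 0, A > 0, and B, C be real with σ² + 2C > 0, and set β = √(σ² + 2C)/σ; assume β is not an integer. Let f : (0,∞) → ℝ be differentiable and satisfy the Riccati equation σ x f'(x) − σ f(x) + (1/2) f(x)² + 2σν + 2σμ x² = (1/2) A x² + B x + C for all x > 0, and let F : (0,∞) → ℝ be differentiable with F'(x) = f(x)/x. Fix y > 0 and real constants C₁, C₂, and define for t > 0, x > 0: p(t,x,y) = ( √(Axy) / (2σ sinh(√A t/2)) ) exp( −( Bt + √A (x+y) coth(√A t/2) + F(x) − F(y) )/(2σ) ) · ( C₁ I_β( √(Axy)/(σ sinh(√A t/2)) ) + C₂ I_{−β}( √(Axy)/(σ sinh(√A t/2)) ) ). Then for all t > 0 and x > 0, ∂_t p = σ x ∂²_x p + f(x) ∂_x p − ( ν/x + μ x ) p. -/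

import Mathlib

open Real MeasureTheory

/-- The modified Bessel function of the first kind,
`I_ν(z) = ∑_{k=0}^∞ (z/2)^{2k+ν} / (k! Γ(k+ν+1))`. -/
noncomputable def besselI (ν z : ℝ) : ℝ :=
  ∑' k : ℕ, (z / 2) ^ (2 * (k : ℝ) + ν) / ((Nat.factorial k : ℝ) * Real.Gamma ((k : ℝ) + ν + 1))

/-!
Write `p = e^{-F/(2σ)} v`. Because `F' = f/x` and `f` solves the Riccati equation, this gauge
transformation turns `σ x ∂ₓ² + f ∂ₓ - (ν/x + μ x)` into `σ x ∂ₓ² - (A x/(4σ) + B/(2σ) + C/(2σx))`.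
The reduced equation is solved by the ansatz `v = K(t) e^{-λ(t) x} H(b(t) x)` as soon as
`b' = -2σλb`, `λ' = A/(4σ) - σλ²`, `K' = (σb/4 - B/(2σ)) K` and `4 y² H'' = (y + β² - 1) H` with
`σ²(β² - 1) = 2C`. The coefficients `λ = √A coth(√A t/2)/(2σ)` and `b = A y/(σ sinh(√A t/2))²`
solve this Riccati system, and `H(y) = √y G(√y)` solves the equation for `H` whenever `G` solves
the modified Bessel equation of order `β`, as `I_β` and `I_{-β}` do.
-/

open Set Filter Topology

theorem one_le_Gamma {s : ℝ} (hs : 2 ≤ s) : 1 ≤ Gamma s :=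
  Gamma_two ▸ Gamma_strictMonoOn_Ici.monotoneOn (mem_Ici.2 le_rfl) (mem_Ici.2 hs) hs

-- Valid at the poles `s ∈ -ℕ` too, where Mathlib's `Gamma` is `0`.
theorem inv_Gamma_eq_mul_inv_Gamma_add_one (s : ℝ) : (Gamma s)⁻¹ = s * (Gamma (s + 1))⁻¹ := by
  rcases eq_or_ne s 0 with rfl | hs
  · simp
  · rw [Gamma_add_one hs, mul_inv, ← mul_assoc, mul_inv_cancel₀ hs, one_mul]

/-- Factoring `(z/2)^ν` out of `besselI ν z` leaves this power series in `(z/2)^2`; it has infinite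
radius of convergence and can be differentiated termwise. -/
noncomputable def besselIEntire (ν w : ℝ) : ℝ :=
  ∑' k : ℕ, w ^ k / ((Nat.factorial k : ℝ) * Gamma (k + ν + 1))

theorem summable_norm_besselIEntire_term (ν w : ℝ) :
    Summable fun k : ℕ => ‖w ^ k / ((Nat.factorial k : ℝ) * Gamma (k + ν + 1))‖ := by
  refine .of_norm_bounded_eventually (Real.summable_pow_div_factorial |w|) ?_
  rw [Nat.cofinite_eq_atTop, eventually_atTop]
  refine ⟨⌈|ν|⌉₊ + 1, fun k hk => ?_⟩
  have hk' : (⌈|ν|⌉₊ + 1 : ℝ) ≤ k := by exact_mod_cast hk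
  have hΓ : 1 ≤ Gamma (k + ν + 1) :=
    one_le_Gamma (by linarith [Nat.le_ceil |ν|, neg_abs_le ν])
  rw [norm_norm, norm_div, norm_mul, norm_pow, Real.norm_natCast,
    norm_of_nonneg (zero_le_one.trans hΓ)]
  exact div_le_div_of_nonneg_left (by positivity) (by positivity)
    (le_mul_of_one_le_right (by positivity) hΓ)

theorem hasDerivAt_besselIEntire (ν w : ℝ) :
    HasDerivAt (besselIEntire ν) (besselIEntire (ν + 1) w) w := by
  set R := |w| + 1
  have hw : w ∈ Ioo (-R) R := ⟨by linarith [neg_abs_le w], by linarith [le_abs_self w]⟩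
  have shift (u : ℝ) (k : ℕ) :
      ((k + 1 : ℕ) : ℝ) * u ^ (k + 1 - 1)
          / ((Nat.factorial (k + 1) : ℝ) * Gamma ((k + 1 : ℕ) + ν + 1))
        = u ^ k / ((Nat.factorial k : ℝ) * Gamma (k + (ν + 1) + 1)) := by
    rw [Nat.factorial_succ, Nat.add_sub_cancel]
    push_cast
    rw [show (k : ℝ) + 1 + ν + 1 = k + (ν + 1) + 1 by ring, mul_assoc,
      mul_div_mul_left _ _ (by positivity)]
  have hbound : ∀ (k : ℕ), ∀ u ∈ Ioo (-R) R,
      ‖(k : ℝ) * u ^ (k - 1) / ((Nat.factorial k : ℝ) * Gamma (k + ν + 1))‖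
        ≤ ‖(k : ℝ) * R ^ (k - 1) / ((Nat.factorial k : ℝ) * Gamma (k + ν + 1))‖ := by
    intro k u hu
    simp only [norm_div, norm_mul, norm_pow]
    gcongr
    rw [Real.norm_eq_abs, Real.norm_eq_abs, abs_of_pos (by positivity : 0 < R)]
    exact (abs_lt.2 hu).le
  have hsum : Summable fun k : ℕ =>
      ‖(k : ℝ) * R ^ (k - 1) / ((Nat.factorial k : ℝ) * Gamma (k + ν + 1))‖ :=
    (summable_nat_add_iff 1).1
      (by simpa only [shift] using summable_norm_besselIEntire_term (ν + 1) R)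
  have hderiv := hasDerivAt_tsum_of_isPreconnected hsum isOpen_Ioo (convex_Ioo _ _).isPreconnected
    (fun k u _ => (hasDerivAt_pow k u).div_const _) hbound hw
    (summable_norm_besselIEntire_term ν w).of_norm hw
  rw [(hsum.of_norm_bounded (hbound · w hw)).tsum_eq_zero_add] at hderiv
  simp only [shift, CharP.cast_eq_zero, zero_mul, zero_div, zero_add] at hderiv
  exact hderiv

theorem besselIEntire_eq (ν w : ℝ) :
    besselIEntire ν w = (ν + 1) * besselIEntire (ν + 1) w + w * besselIEntire (ν + 2) w := by
  have hsum (ν : ℝ) := (summable_norm_besselIEntire_term ν w).of_norm.hasSum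
  have hshift : HasSum (fun k : ℕ => k * w ^ k / ((Nat.factorial k : ℝ) * Gamma (k + (ν + 1) + 1)))
      (w * besselIEntire (ν + 2) w) := by
    rw [← hasSum_nat_add_iff' 1]
    simp only [Finset.sum_range_one, CharP.cast_eq_zero, zero_mul, zero_div, sub_zero]
    refine ((hsum (ν + 2)).mul_left w).congr_fun fun k => ?_
    rw [Nat.factorial_succ]
    push_cast
    rw [show (k : ℝ) + 1 + (ν + 1) + 1 = k + (ν + 2) + 1 by ring]
    field_simp
    ring
  have hterm (k : ℕ) : w ^ k / ((Nat.factorial k : ℝ) * Gamma (k + ν + 1))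
      = (ν + 1) * (w ^ k / ((Nat.factorial k : ℝ) * Gamma (k + (ν + 1) + 1)))
        + k * w ^ k / ((Nat.factorial k : ℝ) * Gamma (k + (ν + 1) + 1)) := by
    rw [div_eq_mul_inv, mul_inv, inv_Gamma_eq_mul_inv_Gamma_add_one,
      show (k : ℝ) + ν + 1 + 1 = k + (ν + 1) + 1 by ring]
    ring
  refine (hsum ν).unique ?_
  simp_rw [hterm]
  exact ((hsum (ν + 1)).mul_left (ν + 1)).add hshift

theorem besselI_eq_rpow_mul_besselIEntire (ν : ℝ) {z : ℝ} (hz : 0 < z) :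
    besselI ν z = (z / 2) ^ ν * besselIEntire ν ((z / 2) ^ 2) := by
  rw [besselI, besselIEntire, ← tsum_mul_left]
  congr 1 with k
  rw [show 2 * (k : ℝ) + ν = ((2 * k : ℕ) : ℝ) + ν by push_cast; ring,
    rpow_add (by positivity), rpow_natCast, pow_mul]
  ring

theorem hasDerivAt_besselI (ν : ℝ) {z : ℝ} (hz : 0 < z) :
    HasDerivAt (besselI ν) (besselI (ν + 1) z + ν / z * besselI ν z) z := by
  have hz2 : z / 2 ≠ 0 := by positivity
  have hhalf : HasDerivAt (fun u : ℝ => u / 2) (1 / 2) z := (hasDerivAt_id z).div_const 2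
  have hprod := ((hasDerivAt_rpow_const (p := ν) (Or.inl hz2)).comp z hhalf).mul
    ((hasDerivAt_besselIEntire ν _).comp z ((hasDerivAt_pow 2 _).comp z hhalf))
  refine (hprod.congr_deriv ?_).congr_of_eventuallyEq ?_
  · rw [besselI_eq_rpow_mul_besselIEntire ν hz, besselI_eq_rpow_mul_besselIEntire _ hz,
      rpow_add_one hz2, rpow_sub_one hz2]
    simp only [Function.comp_apply]
    field_simp
    ring
  · filter_upwards [Ioi_mem_nhds hz] with u hu
    exact besselI_eq_rpow_mul_besselIEntire ν hu

theorem besselI_sub_besselI_add_two (ν : ℝ) {z : ℝ} (hz : 0 < z) :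
    besselI ν z - besselI (ν + 2) z = 2 * (ν + 1) / z * besselI (ν + 1) z := by
  have hz2 : z / 2 ≠ 0 := by positivity
  simp only [besselI_eq_rpow_mul_besselIEntire _ hz]
  rw [besselIEntire_eq ν, rpow_add_one hz2, rpow_add (by positivity), rpow_two]
  field_simp
  ring

structure IsModifiedBesselSolution (ν : ℝ) (G : ℝ → ℝ) : Prop where
  differentiableOn : DifferentiableOn ℝ G (Ioi 0)
  differentiableOn_deriv : DifferentiableOn ℝ (deriv G) (Ioi 0)
  ode : ∀ z > 0, z ^ 2 * deriv (deriv G) z + z * deriv G z = (z ^ 2 + ν ^ 2) * G z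

theorem isModifiedBesselSolution_besselI (ν : ℝ) : IsModifiedBesselSolution ν (besselI ν) := by
  have hderiv : EqOn (deriv (besselI ν)) (fun z => besselI (ν + 1) z + ν / z * besselI ν z)
      (Ioi 0) :=
    fun z hz => (hasDerivAt_besselI ν hz).deriv
  have hderiv2 {z : ℝ} (hz : 0 < z) := (((hasDerivAt_besselI (ν + 1) hz).add
    (((hasDerivAt_inv hz.ne').const_mul ν).mul (hasDerivAt_besselI ν hz))).congr_of_eventuallyEq
    (eventually_of_mem (Ioi_mem_nhds hz) hderiv))
  refine ⟨fun z hz => (hasDerivAt_besselI ν hz).differentiableAt.differentiableWithinAt,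
    fun z hz => (hderiv2 hz).differentiableAt.differentiableWithinAt, fun z hz => ?_⟩
  rw [(hderiv2 hz).deriv, hderiv hz]
  have hrec := besselI_sub_besselI_add_two ν hz
  rw [show ν + 1 + 1 = ν + 2 by ring]
  field_simp at hrec ⊢
  linear_combination (-z) * hrec

namespace IsModifiedBesselSolution

variable {ν : ℝ} {G : ℝ → ℝ}

theorem of_neg (h : IsModifiedBesselSolution (-ν) G) : IsModifiedBesselSolution ν G :=
  ⟨h.differentiableOn, h.differentiableOn_deriv, by simpa only [neg_sq] using h.ode⟩

theorem linear_comb {G₁ G₂ : ℝ → ℝ} (h₁ : IsModifiedBesselSolution ν G₁)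
    (h₂ : IsModifiedBesselSolution ν G₂) (c₁ c₂ : ℝ) :
    IsModifiedBesselSolution ν (fun z => c₁ * G₁ z + c₂ * G₂ z) := by
  have hderiv : EqOn (deriv fun z => c₁ * G₁ z + c₂ * G₂ z)
      (fun z => c₁ * deriv G₁ z + c₂ * deriv G₂ z) (Ioi 0) := fun z hz =>
    (((h₁.differentiableOn.differentiableAt (Ioi_mem_nhds hz)).hasDerivAt.const_mul c₁).add
      ((h₂.differentiableOn.differentiableAt (Ioi_mem_nhds hz)).hasDerivAt.const_mul c₂)).deriv
  have hderiv2 {z : ℝ} (hz : 0 < z) := ((((h₁.differentiableOn_deriv.differentiableAt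
    (Ioi_mem_nhds hz)).hasDerivAt.const_mul c₁).add ((h₂.differentiableOn_deriv.differentiableAt
    (Ioi_mem_nhds hz)).hasDerivAt.const_mul c₂))).congr_of_eventuallyEq
    (eventually_of_mem (Ioi_mem_nhds hz) hderiv)
  refine ⟨(h₁.differentiableOn.const_mul c₁).add (h₂.differentiableOn.const_mul c₂),
    fun z hz => (hderiv2 hz).differentiableAt.differentiableWithinAt, fun z hz => ?_⟩
  rw [(hderiv2 hz).deriv, hderiv hz]
  linear_combination c₁ * h₁.ode z hz + c₂ * h₂.ode z hz

end IsModifiedBesselSolution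

structure IsSqrtModifiedBesselSolution (ν : ℝ) (H : ℝ → ℝ) : Prop where
  differentiableOn : DifferentiableOn ℝ H (Ioi 0)
  differentiableOn_deriv : DifferentiableOn ℝ (deriv H) (Ioi 0)
  ode : ∀ y > 0, 4 * y ^ 2 * deriv (deriv H) y = (y + ν ^ 2 - 1) * H y

theorem IsModifiedBesselSolution.sqrt_mul_comp_sqrt {ν : ℝ} {G : ℝ → ℝ}
    (hG : IsModifiedBesselSolution ν G) : IsSqrtModifiedBesselSolution ν fun y => √y * G √y := by
  have hcomp {Φ : ℝ → ℝ} (hΦ : DifferentiableOn ℝ Φ (Ioi 0)) {y : ℝ} (hy : 0 < y) :=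
    (hΦ.differentiableAt (Ioi_mem_nhds (sqrt_pos.2 hy))).hasDerivAt.comp y (hasDerivAt_sqrt hy.ne')
  have hderiv : EqOn (deriv fun y => √y * G √y) (fun y => G √y / (2 * √y) + deriv G √y / 2)
      (Ioi 0) := fun y (hy : 0 < y) => by
    have h : HasDerivAt (fun y => √y * G √y) _ y :=
      (hasDerivAt_sqrt hy.ne').mul (hcomp hG.differentiableOn hy)
    rw [h.deriv]
    field_simp [(sqrt_pos.2 hy).ne']
  have hderiv2 {y : ℝ} (hy : 0 < y) := (((hcomp hG.differentiableOn hy).div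
    ((hasDerivAt_sqrt hy.ne').const_mul 2) (by positivity)).add
    ((hcomp hG.differentiableOn_deriv hy).div_const 2)).congr_of_eventuallyEq
    (eventually_of_mem (Ioi_mem_nhds hy) hderiv)
  refine ⟨fun y hy => ((hasDerivAt_sqrt (ne_of_gt hy)).mul
      (hcomp hG.differentiableOn hy)).differentiableAt.differentiableWithinAt,
    fun y hy => (hderiv2 hy).differentiableAt.differentiableWithinAt, fun y hy => ?_⟩
  rw [(hderiv2 hy).deriv]
  obtain ⟨r, hr, rfl⟩ : ∃ r > 0, y = r ^ 2 := ⟨√y, sqrt_pos.2 hy, (sq_sqrt hy.le).symm⟩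
  simp only [sqrt_sq hr.le, Function.comp_apply]
  linear_combination (norm := skip) r * hG.ode r hr
  field_simp
  ring

noncomputable def kernelAnsatz (K lam b H : ℝ → ℝ) (t x : ℝ) : ℝ :=
  K t * exp (-(lam t * x)) * H (b t * x)

section kernelAnsatz

variable {K lam b H : ℝ → ℝ} {t x : ℝ}

theorem hasDerivAt_kernelAnsatz_time {K' lam' b' : ℝ} (hK : HasDerivAt K K' t)
    (hlam : HasDerivAt lam lam' t) (hb : HasDerivAt b b' t) (hH : DifferentiableAt ℝ H (b t * x)) :
    HasDerivAt (fun τ => kernelAnsatz K lam b H τ x) (exp (-(lam t * x)) *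
      (K' * H (b t * x) - K t * lam' * x * H (b t * x) + K t * b' * x * deriv H (b t * x))) t :=
  ((hK.mul (hlam.mul_const x).neg.exp).mul (hH.hasDerivAt.comp t (hb.mul_const x))).congr_deriv
    (by simp only [Pi.neg_apply, Pi.mul_apply, Function.comp_apply]; ring)

theorem hasDerivAt_kernelAnsatz_space (hH : DifferentiableAt ℝ H (b t * x)) :
    HasDerivAt (kernelAnsatz K lam b H t)
      (kernelAnsatz K lam b (fun y => b t * deriv H y - lam t * H y) t x) x := by
  have hlin (c : ℝ) : HasDerivAt (fun ξ => c * ξ) c x := by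
    simpa using (hasDerivAt_id x).const_mul c
  refine ((((hlin (lam t)).neg.exp).const_mul (K t)).mul
    (hH.hasDerivAt.comp x (hlin (b t)))).congr_deriv ?_
  simp only [kernelAnsatz, Pi.neg_apply, Function.comp_apply]
  ring

theorem hasDerivAt_deriv_kernelAnsatz_space (hx : 0 < x) (hbt : 0 < b t)
    (hH : DifferentiableOn ℝ H (Ioi 0)) (hH' : DifferentiableOn ℝ (deriv H) (Ioi 0)) :
    HasDerivAt (deriv (kernelAnsatz K lam b H t)) (kernelAnsatz K lam b
      (fun y => b t * (b t * deriv (deriv H) y - lam t * deriv H y)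
        - lam t * (b t * deriv H y - lam t * H y)) t x) x := by
  have hbx : 0 < b t * x := by positivity
  have hΨ : HasDerivAt (fun y => b t * deriv H y - lam t * H y)
      (b t * deriv (deriv H) (b t * x) - lam t * deriv H (b t * x)) (b t * x) :=
    ((hH'.differentiableAt (Ioi_mem_nhds hbx)).hasDerivAt.const_mul (b t)).sub
      ((hH.differentiableAt (Ioi_mem_nhds hbx)).hasDerivAt.const_mul (lam t))
  refine ((hasDerivAt_kernelAnsatz_space hΨ.differentiableAt).congr_deriv ?_).congr_of_eventuallyEq
    ((eventually_gt_nhds hx).mono fun ξ hξ => (hasDerivAt_kernelAnsatz_space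
      (hH.differentiableAt (Ioi_mem_nhds (mul_pos hbt hξ)))).deriv)
  simp only [kernelAnsatz, hΨ.deriv]

theorem hasDerivAt_kernelAnsatz_of_riccati {σ A B C β : ℝ} (hσ : σ ≠ 0) (hx : 0 < x)
    (hbt : 0 < b t) (hH : IsSqrtModifiedBesselSolution β H) (hβ : σ ^ 2 * (β ^ 2 - 1) = 2 * C)
    (hK : HasDerivAt K ((σ * b t / 4 - B / (2 * σ)) * K t) t)
    (hlam : HasDerivAt lam (A / (4 * σ) - σ * lam t ^ 2) t)
    (hb : HasDerivAt b (-(2 * σ * lam t * b t)) t) :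
    HasDerivAt (fun τ => kernelAnsatz K lam b H τ x)
      (σ * x * deriv (deriv (kernelAnsatz K lam b H t)) x
        - (A * x / (4 * σ) + B / (2 * σ) + C / (2 * σ * x)) * kernelAnsatz K lam b H t x) t := by
  have hbx : 0 < b t * x := by positivity
  refine (hasDerivAt_kernelAnsatz_time hK hlam hb
    (hH.differentiableOn.differentiableAt (Ioi_mem_nhds hbx))).congr_deriv ?_
  rw [(hasDerivAt_deriv_kernelAnsatz_space hx hbt hH.differentiableOn
    hH.differentiableOn_deriv).deriv]
  simp only [kernelAnsatz]
  linear_combination (norm := skip) -(σ * K t * exp (-(lam t * x)) / (4 * x)) * hH.ode _ hbx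
    - (K t * exp (-(lam t * x)) * H (b t * x) / (4 * σ * x)) * hβ
  field_simp
  ring

end kernelAnsatz

theorem riccati_gauge_transform {σ μ ν A B C x : ℝ} {f F u : ℝ → ℝ} (hσ : σ ≠ 0) (hx : 0 < x)
    (hf : DifferentiableAt ℝ f x)
    (hRic : σ * x * deriv f x - σ * f x + (1 / 2) * (f x) ^ 2 + 2 * σ * ν + 2 * σ * μ * x ^ 2
      = (1 / 2) * A * x ^ 2 + B * x + C)
    (hF : ∀ᶠ ξ in 𝓝 x, HasDerivAt F (f ξ / ξ) ξ)
    (hu : ∀ᶠ ξ in 𝓝 x, DifferentiableAt ℝ u ξ) (hu' : DifferentiableAt ℝ (deriv u) x) :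
    σ * x * deriv (deriv fun ξ => exp (-F ξ / (2 * σ)) * u ξ) x
        + f x * deriv (fun ξ => exp (-F ξ / (2 * σ)) * u ξ) x
        - (ν / x + μ * x) * (exp (-F x / (2 * σ)) * u x)
      = exp (-F x / (2 * σ)) * (σ * x * deriv (deriv u) x
        - (A * x / (4 * σ) + B / (2 * σ) + C / (2 * σ * x)) * u x) := by
  have hderiv : ∀ᶠ ξ in 𝓝 x, HasDerivAt (fun ξ => exp (-F ξ / (2 * σ)) * u ξ)
      (exp (-F ξ / (2 * σ)) * (deriv u ξ - f ξ / (2 * σ * ξ) * u ξ)) ξ :=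
    (hF.and hu).mono fun ξ ⟨hFξ, huξ⟩ =>
      ((hFξ.neg.div_const _).exp.mul huξ.hasDerivAt).congr_deriv (by simp only [Pi.neg_apply]; ring)
  have hderiv2 : HasDerivAt (fun ξ => exp (-F ξ / (2 * σ)) * (deriv u ξ - f ξ / (2 * σ * ξ) * u ξ))
      _ x :=
    (hF.self_of_nhds.neg.div_const _).exp.mul (hu'.hasDerivAt.sub
      ((hf.hasDerivAt.div ((hasDerivAt_id x).const_mul (2 * σ)) (by positivity)).mul
        hu.self_of_nhds.hasDerivAt))
  rw [Filter.EventuallyEq.deriv_eq (hderiv.mono fun ξ hξ => hξ.deriv), hderiv2.deriv,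
    hderiv.self_of_nhds.deriv]
  simp only [Pi.neg_apply, Pi.div_apply, id]
  linear_combination (norm := skip) (-(exp (-F x / (2 * σ)) * u x / (2 * σ * x))) * hRic
  field_simp
  ring

theorem hasDerivAt_cosh_div_sinh {a t : ℝ} (ht : sinh (a * t / 2) ≠ 0) :
    HasDerivAt (fun τ => cosh (a * τ / 2) / sinh (a * τ / 2))
      (-(a / 2) / sinh (a * t / 2) ^ 2) t := by
  have hθ : HasDerivAt (fun τ => a * τ / 2) (a / 2) t := by
    simpa using ((hasDerivAt_id t).const_mul a).div_const 2
  refine (hθ.cosh.div hθ.sinh ht).congr_deriv ?_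
  field_simp
  linear_combination (-a) * cosh_sq (a * t / 2)

section kernelCoefficients

variable {σ A : ℝ} (B c y : ℝ) {t : ℝ}

noncomputable def kernelRate (σ A t : ℝ) : ℝ :=
  √A * (cosh (√A * t / 2) / sinh (√A * t / 2)) / (2 * σ)

noncomputable def kernelScale (σ A y t : ℝ) : ℝ :=
  A * y / (σ * sinh (√A * t / 2)) ^ 2

noncomputable def kernelAmplitude (σ A B c y t : ℝ) : ℝ :=
  exp (-(B * t + √A * y * (cosh (√A * t / 2) / sinh (√A * t / 2)) - c) / (2 * σ)) / 2

theorem hasDerivAt_kernelRate (hσ : σ ≠ 0) (hA : 0 ≤ A) (ht : sinh (√A * t / 2) ≠ 0) :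
    HasDerivAt (kernelRate σ A) (A / (4 * σ) - σ * kernelRate σ A t ^ 2) t := by
  refine (((hasDerivAt_cosh_div_sinh ht).const_mul √A).div_const (2 * σ)).congr_deriv ?_
  simp only [kernelRate]
  linear_combination (norm := skip)
    (√A ^ 2 / (4 * σ * sinh (√A * t / 2) ^ 2)) * cosh_sq (√A * t / 2) + (1 / (4 * σ)) * sq_sqrt hA
  field_simp
  ring

theorem hasDerivAt_kernelScale (hσ : σ ≠ 0) (ht : sinh (√A * t / 2) ≠ 0) :
    HasDerivAt (kernelScale σ A y) (-(2 * σ * kernelRate σ A t * kernelScale σ A y t)) t := by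
  have hθ : HasDerivAt (fun τ => √A * τ / 2) (√A / 2) t := by
    simpa using ((hasDerivAt_id t).const_mul √A).div_const 2
  refine ((hasDerivAt_const t (A * y)).div ((hθ.sinh.const_mul σ).pow 2)
    (by simp [hσ, ht])).congr_deriv ?_
  simp only [kernelRate, kernelScale, Pi.pow_apply]
  field_simp
  ring

theorem hasDerivAt_kernelAmplitude (hσ : σ ≠ 0) (hA : 0 ≤ A) (ht : sinh (√A * t / 2) ≠ 0) :
    HasDerivAt (kernelAmplitude σ A B c y)
      ((σ * kernelScale σ A y t / 4 - B / (2 * σ)) * kernelAmplitude σ A B c y t) t := by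
  refine (((((hasDerivAt_id t).const_mul B).add ((hasDerivAt_cosh_div_sinh ht).const_mul (√A * y))
    |>.sub_const c).neg.div_const (2 * σ)).exp.div_const 2).congr_deriv ?_
  simp only [kernelScale, kernelAmplitude, Pi.neg_apply, Pi.add_apply, id]
  field_simp
  rw [sq_sqrt hA]
  ring

end kernelCoefficients

theorem exp_mul_kernelAnsatz_eq {σ A B y τ ξ : ℝ} (a c : ℝ) (G : ℝ → ℝ) (hσ : 0 < σ) (hA : 0 < A)
    (hτ : 0 < τ) :
    exp (-a / (2 * σ)) * kernelAnsatz (kernelAmplitude σ A B c y) (kernelRate σ A)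
      (kernelScale σ A y) (fun z => √z * G √z) τ ξ
    = √(A * ξ * y) / (2 * σ * sinh (√A * τ / 2))
      * exp (-(B * τ + √A * (ξ + y) * (cosh (√A * τ / 2) / sinh (√A * τ / 2)) + a - c) / (2 * σ))
      * G (√(A * ξ * y) / (σ * sinh (√A * τ / 2))) := by
  have hs : 0 < σ * sinh (√A * τ / 2) := mul_pos hσ (sinh_pos_iff.2 (by positivity))
  have hsqrt : √(kernelScale σ A y τ * ξ) = √(A * ξ * y) / (σ * sinh (√A * τ / 2)) := by
    rw [kernelScale, show A * y / (σ * sinh (√A * τ / 2)) ^ 2 * ξ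
      = A * ξ * y / (σ * sinh (√A * τ / 2)) ^ 2 by ring, sqrt_div' _ (sq_nonneg _), sqrt_sq hs.le]
  have hexp (coth : ℝ) : exp (-(B * τ + √A * (ξ + y) * coth + a - c) / (2 * σ))
      = exp (-a / (2 * σ)) * exp (-(B * τ + √A * y * coth - c) / (2 * σ))
        * exp (-(√A * coth / (2 * σ) * ξ)) := by
    rw [← exp_add, ← exp_add]
    ring_nf
  simp only [kernelAnsatz, kernelAmplitude, kernelRate, hsqrt, hexp]
  field_simp

theorem stmt_18_general (σ μ ν A B C β : ℝ) (hσ : 0 < σ) (hA : 0 < A)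
    (hC : 0 < σ ^ 2 + 2 * C)
    (hβ : β = Real.sqrt (σ ^ 2 + 2 * C) / σ)
    (f F : ℝ → ℝ)
    (hf : ∀ x > (0 : ℝ), DifferentiableAt ℝ f x)
    (hRic : ∀ x > (0 : ℝ),
      σ * x * deriv f x - σ * f x + (1 / 2) * (f x) ^ 2 + 2 * σ * ν + 2 * σ * μ * x ^ 2
        = (1 / 2) * A * x ^ 2 + B * x + C)
    (hF : ∀ x > (0 : ℝ), HasDerivAt F (f x / x) x)
    (y : ℝ) (hy : 0 < y) (C₁ C₂ : ℝ)
    (p : ℝ → ℝ → ℝ)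
    (hp : ∀ t x, p t x =
      (Real.sqrt (A * x * y) / (2 * σ * Real.sinh (Real.sqrt A * t / 2)))
        * Real.exp (-(B * t
            + Real.sqrt A * (x + y)
                * (Real.cosh (Real.sqrt A * t / 2) / Real.sinh (Real.sqrt A * t / 2))
            + F x - F y) / (2 * σ))
        * (C₁ * besselI β (Real.sqrt (A * x * y) / (σ * Real.sinh (Real.sqrt A * t / 2)))
          + C₂ * besselI (-β)
              (Real.sqrt (A * x * y) / (σ * Real.sinh (Real.sqrt A * t / 2))))) :
    ∀ t > (0 : ℝ), ∀ x > (0 : ℝ),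
      deriv (fun τ => p τ x) t
        = σ * x * deriv (deriv (fun ξ => p t ξ)) x
          + f x * deriv (fun ξ => p t ξ) x - (ν / x + μ * x) * p t x := by
  intro t ht x hx
  set G : ℝ → ℝ := fun z => C₁ * besselI β z + C₂ * besselI (-β) z
  set v := kernelAnsatz (kernelAmplitude σ A B (F y) y) (kernelRate σ A) (kernelScale σ A y)
    fun z => √z * G √z
  have hH : IsSqrtModifiedBesselSolution β fun z => √z * G √z :=
    ((isModifiedBesselSolution_besselI β).linear_comb
      (isModifiedBesselSolution_besselI (-β)).of_neg C₁ C₂).sqrt_mul_comp_sqrt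
  have hβC : σ ^ 2 * (β ^ 2 - 1) = 2 * C := by
    rw [hβ, div_pow, sq_sqrt hC.le]
    field_simp
    ring
  have hp_eq (τ : ℝ) (hτ : 0 < τ) (ξ : ℝ) : p τ ξ = exp (-F ξ / (2 * σ)) * v τ ξ := by
    rw [hp, exp_mul_kernelAnsatz_eq _ _ G hσ hA hτ]
  have hs : 0 < sinh (√A * t / 2) := sinh_pos_iff.2 (by positivity)
  have hbt : 0 < kernelScale σ A y t := div_pos (by positivity) (pow_pos (mul_pos hσ hs) 2)
  have hvt := hasDerivAt_kernelAnsatz_of_riccati hσ.ne' hx hbt hH hβC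
    (hasDerivAt_kernelAmplitude B (F y) y hσ.ne' hA.le hs.ne')
    (hasDerivAt_kernelRate hσ.ne' hA.le hs.ne') (hasDerivAt_kernelScale y hσ.ne' hs.ne')
  have hvx : ∀ᶠ ξ in 𝓝 x, DifferentiableAt ℝ (v t) ξ := (eventually_gt_nhds hx).mono fun ξ hξ =>
    (hasDerivAt_kernelAnsatz_space (hH.differentiableOn.differentiableAt
      (Ioi_mem_nhds (mul_pos hbt hξ)))).differentiableAt
  rw [Filter.EventuallyEq.deriv_eq ((eventually_gt_nhds ht).mono fun τ hτ => hp_eq τ hτ x),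
    (hvt.const_mul _).deriv, funext (hp_eq t ht)]
  beta_reduce
  rw [riccati_gauge_transform hσ.ne' hx (hf x hx) (hRic x hx) ((eventually_gt_nhds hx).mono hF) hvx
    (hasDerivAt_deriv_kernelAnsatz_space hx hbt hH.differentiableOn
      hH.differentiableOn_deriv).differentiableAt]

/-- The fundamental solution formula of Theorem 5.10 for the PDE
`u_t = σ x u_xx + f(x) u_x - (ν/x + μx) u` when the drift `f` solves the Riccati
equation `σ x f' - σ f + f²/2 + 2σν + 2σμx² = (1/2)Ax² + Bx + C` with `A > 0`. -/
theorem stmt_18 (σ μ ν A B C β : ℝ) (hσ : 0 < σ) (hμ : 0 < μ) (hν : 0 < ν) (hA : 0 < A)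
    (hC : 0 < σ ^ 2 + 2 * C)
    (hβ : β = Real.sqrt (σ ^ 2 + 2 * C) / σ) (hβint : ∀ n : ℤ, β ≠ (n : ℝ))
    (f F : ℝ → ℝ)
    (hf : ∀ x > (0 : ℝ), DifferentiableAt ℝ f x)
    (hRic : ∀ x > (0 : ℝ),
      σ * x * deriv f x - σ * f x + (1 / 2) * (f x) ^ 2 + 2 * σ * ν + 2 * σ * μ * x ^ 2
        = (1 / 2) * A * x ^ 2 + B * x + C)
    (hF : ∀ x > (0 : ℝ), HasDerivAt F (f x / x) x)
    (y : ℝ) (hy : 0 < y) (C₁ C₂ : ℝ)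
    (p : ℝ → ℝ → ℝ)
    (hp : ∀ t x, p t x =
      (Real.sqrt (A * x * y) / (2 * σ * Real.sinh (Real.sqrt A * t / 2)))
        * Real.exp (-(B * t
            + Real.sqrt A * (x + y)
                * (Real.cosh (Real.sqrt A * t / 2) / Real.sinh (Real.sqrt A * t / 2))
            + F x - F y) / (2 * σ))
        * (C₁ * besselI β (Real.sqrt (A * x * y) / (σ * Real.sinh (Real.sqrt A * t / 2)))
          + C₂ * besselI (-β)
              (Real.sqrt (A * x * y) / (σ * Real.sinh (Real.sqrt A * t / 2))))) :
    ∀ t > (0 : ℝ), ∀ x > (0 : ℝ),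
      deriv (fun τ => p τ x) t
        = σ * x * deriv (deriv (fun ξ => p t ξ)) x
          + f x * deriv (fun ξ => p t ξ) x - (ν / x + μ * x) * p t x :=
  stmt_18_general σ μ ν A B C β hσ hA hC hβ f F hf hRic hF y hy C₁ C₂ p hp
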